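/- There exist a constant c > 0 and N₀ such that for all n ≥ N₀, Σ_{i=1}^{n} C(n,i) · C(n, ⌈i·d(i)/100⌉) · ( i·d(i)/(100n) )^{i·d(i)} ≤ c·n^{−2}, where d(i) = min(√(n/i), log n), C(a,b) denotes the binomial coefficient, and the exponentiation x^{y} is the real power with real exponent i·d(i). -/

import Mathlib

/-!
With `t = i * d(i)` and `u = log (n / t) ≥ 0`, the bound `C(n, m) ≤ (e n / m) ^ m` bounds the
logarithm of the `i`-th summand by
`i (1 + u + log d) + (t / 100 + 1) (1 + log 100 + u) - t (log 100 + u)`.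
The last term wins: `log 100 > 9 / 2` beats the constant contributions, and the coefficient of `u`
is negative unless `d < 2`, in which case `d = √(n / i)`, so `t d = n` and `u = log d < 1`.
Since `t ≥ log n` once `(log n)² ≤ n`, every summand is at most `n⁻³`.
-/

/-- `d(i) = min(√(n/i), log n)`. -/
noncomputable def dFun (n i : ℕ) : ℝ :=
  min (Real.sqrt ((n : ℝ) / (i : ℝ))) (Real.log n)

open Real Filter

theorem choose_le_exp_mul_one_add_log_div {n m : ℕ} (hn : 0 < n) (hm : 0 < m) :
    (n.choose m : ℝ) ≤ exp (m * (1 + log (n / m))) := by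
  have hnm : (0 : ℝ) < n / m := by positivity
  calc (n.choose m : ℝ) ≤ n ^ m / m.factorial := Nat.choose_le_pow_div m n
    _ = (n / m : ℝ) ^ m * ((m : ℝ) ^ m / m.factorial) := by
      rw [div_pow]; field_simp
    _ ≤ (n / m : ℝ) ^ m * exp m := by
      gcongr
      exact pow_div_factorial_le_exp _ (Nat.cast_nonneg m) m
    _ = exp (m * (1 + log (n / m))) := by
      rw [← rpow_natCast, rpow_def_of_pos hnm, ← exp_add]
      ring_nf

theorem choose_le_exp_of_le_of_le_add_one {n m : ℕ} {x : ℝ} (hx : 0 < x) (hxn : x ≤ n)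
    (hxm : x ≤ m) (hmx : m ≤ x + 1) :
    (n.choose m : ℝ) ≤ exp ((x + 1) * (1 + log (n / x))) := by
  have hn : 0 < n := by exact_mod_cast hx.trans_le hxn
  have hm : 0 < m := by exact_mod_cast hx.trans_le hxm
  refine (choose_le_exp_mul_one_add_log_div hn hm).trans (exp_le_exp.mpr ?_)
  have hlog : 0 ≤ log (n / x) := log_nonneg ((one_le_div hx).mpr hxn)
  have hmono : log (n / m) ≤ log (n / x) :=
    log_le_log (by positivity) (div_le_div_of_nonneg_left (by positivity) hx hxm)
  calc (m : ℝ) * (1 + log (n / m)) ≤ m * (1 + log (n / x)) := by gcongr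
    _ ≤ (x + 1) * (1 + log (n / x)) := by gcongr

theorem nine_halves_lt_log_hundred : (9 / 2 : ℝ) < log 100 := by
  rw [lt_log_iff_exp_lt (by norm_num)]
  refine lt_of_pow_lt_pow_left₀ 2 (by norm_num) ?_
  calc exp (9 / 2) ^ 2 = exp 1 ^ 9 := by rw [← exp_nat_mul, ← exp_nat_mul]; norm_num
    _ < 2.7182818286 ^ 9 := by gcongr; exact exp_one_lt_d9
    _ < 100 ^ 2 := by norm_num

/-- With `t = i d` and `u = log (n / t)`, the three summands bound the logarithms of `C(n, i)`,
`C(n, ⌈t / 100⌉)` and `(t / (100 n)) ^ t`. -/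
theorem summand_exponent_le {i d u lam L : ℝ} (hi : 0 ≤ i) (hd : 1 ≤ d) (hu : 0 ≤ u)
    (hlam : 9 / 2 ≤ lam) (hL : 100 ≤ L) (hLt : L ≤ i * d) (hdu : 2 ≤ d ∨ u ≤ 1) :
    i * (1 + (u + log d)) + (i * d / 100 + 1) * (1 + (lam + u)) - i * d * (lam + u)
      ≤ -(3 * L) := by
  have hlogd : i * log d ≤ i * (d - 1) :=
    mul_le_mul_of_nonneg_left (log_le_sub_one_of_pos (by linarith)) hi
  have hlamt : (i * d / 100 + 1 - i * d) * lam ≤ (i * d / 100 + 1 - i * d) * (9 / 2) :=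
    mul_le_mul_of_nonpos_left hlam (by linarith)
  rcases hdu with hd2 | hu1
  · have hud : (i + i * d / 100 + 1 - i * d) * u ≤ 0 :=
      mul_nonpos_of_nonpos_of_nonneg (by nlinarith) hu
    nlinarith
  · have hid : i ≤ i * d := le_mul_of_one_le_right hi hd
    have hud : (i + i * d / 100 + 1 - i * d) * u ≤ (i * d / 100 + 1) * 1 := by
      nlinarith
    nlinarith

theorem choose_mul_choose_mul_rpow_le_one_div_pow_three {n i : ℕ} {d : ℝ} (hL : 100 ≤ log n)
    (hi : 0 < i) (hd : 1 ≤ d) (hdn : i * d ^ 2 ≤ n) (hLt : log n ≤ i * d)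
    (hdu : 2 ≤ d ∨ i * d ^ 2 = n) :
    (n.choose i : ℝ) * (n.choose ⌈i * d / 100⌉₊ : ℝ) * (i * d / (100 * n)) ^ (i * d)
      ≤ 1 / n ^ 3 := by
  set t : ℝ := i * d with ht
  set u := log (n / t)
  have hn : 0 < n := Nat.pos_of_ne_zero fun h => by norm_num [h] at hL
  have hi' : (0 : ℝ) < i := by exact_mod_cast hi
  have ht0 : 0 < t := by positivity
  have htn : t ≤ n := by nlinarith
  have hu : 0 ≤ u := log_nonneg ((one_le_div ht0).mpr htn)
  have hlog_i : log (n / i) = u + log d := by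
    rw [← log_mul (by positivity) (by positivity)]
    congr 1
    rw [ht]; field_simp
  have hlog_k : log (n / (t / 100)) = log 100 + u := by
    rw [← log_mul (by positivity) (by positivity)]
    congr 1
    field_simp
  have hlog_r : log (t / (100 * n)) = -(log 100 + u) := by
    rw [← hlog_k, ← log_inv]
    congr 1
    field_simp
  have hdu' : 2 ≤ d ∨ u ≤ 1 := by
    rcases hdu with h | h
    · exact .inl h
    by_cases hd2 : 2 ≤ d
    · exact .inl hd2
    have : n / t = d := by rw [← h, ht]; field_simp
    simp only [u, this]
    exact .inr (by linarith [log_le_sub_one_of_pos (by linarith : 0 < d)])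
  have h_i : (n.choose i : ℝ) ≤ exp (i * (1 + (u + log d))) := by
    simpa [hlog_i] using choose_le_exp_mul_one_add_log_div hn hi
  have h_k : (n.choose ⌈t / 100⌉₊ : ℝ) ≤ exp ((t / 100 + 1) * (1 + (log 100 + u))) := by
    rw [← hlog_k]
    exact choose_le_exp_of_le_of_le_add_one (by positivity) (by linarith) (Nat.le_ceil _)
      (Nat.ceil_lt_add_one (by positivity)).le
  have h_r : (t / (100 * n)) ^ t = exp (-(t * (log 100 + u))) := by
    rw [rpow_def_of_pos (by positivity), hlog_r]
    ring_nf
  calc (n.choose i : ℝ) * (n.choose ⌈t / 100⌉₊ : ℝ) * (t / (100 * n)) ^ t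
      ≤ exp (i * (1 + (u + log d))) * exp ((t / 100 + 1) * (1 + (log 100 + u)))
          * exp (-(t * (log 100 + u))) := by
        rw [h_r]
        gcongr
    _ ≤ exp (-(3 * log n)) := by
        rw [← exp_add, ← exp_add, exp_le_exp]
        have := summand_exponent_le hi'.le hd hu nine_halves_lt_log_hundred.le hL hLt hdu'
        linarith
    _ = 1 / n ^ 3 := by
        rw [exp_neg, mul_comm, ← rpow_def_of_pos (by positivity), one_div]
        norm_cast

theorem dFun_nonneg (n i : ℕ) : 0 ≤ dFun n i :=
  le_min (sqrt_nonneg _) (log_natCast_nonneg n)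

theorem one_le_dFun {n i : ℕ} (hi : 0 < i) (hin : i ≤ n) (hL : 1 ≤ log n) : 1 ≤ dFun n i :=
  le_min (one_le_sqrt.mpr ((one_le_div (by exact_mod_cast hi)).mpr (by exact_mod_cast hin))) hL

theorem cast_mul_dFun_sq_le {n i : ℕ} (hi : 0 < i) : i * dFun n i ^ 2 ≤ n := by
  have hi' : (0 : ℝ) < i := by exact_mod_cast hi
  calc (i : ℝ) * dFun n i ^ 2 ≤ i * sqrt ((n : ℝ) / i) ^ 2 := by
        gcongr
        · exact dFun_nonneg n i
        · exact min_le_left _ _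
    _ = (n : ℝ) := by rw [sq_sqrt (by positivity)]; field_simp

theorem log_le_cast_mul_dFun {n i : ℕ} (hi : 0 < i) (hLn : log n ^ 2 ≤ n) :
    log n ≤ i * dFun n i := by
  have hi' : (1 : ℝ) ≤ i := by exact_mod_cast hi
  rcases min_choice (sqrt ((n : ℝ) / i)) (log n) with h | h <;> rw [dFun, h]
  · calc log n ≤ sqrt n := le_sqrt_of_sq_le hLn
      _ ≤ sqrt (i * n) := sqrt_le_sqrt (le_mul_of_one_le_left (by positivity) hi')
      _ = sqrt (i ^ 2 * (n / i)) := by congr 1; field_simp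
      _ = i * sqrt (n / i) := by rw [sqrt_mul (by positivity), sqrt_sq (by positivity)]
  · exact le_mul_of_one_le_left (log_natCast_nonneg n) hi'

theorem two_le_dFun_or_cast_mul_dFun_sq_eq {n i : ℕ} (hi : 0 < i) (hL : 2 ≤ log n) :
    2 ≤ dFun n i ∨ i * dFun n i ^ 2 = n := by
  have hi' : (0 : ℝ) < i := by exact_mod_cast hi
  rcases min_choice (sqrt ((n : ℝ) / i)) (log n) with h | h <;> rw [dFun, h]
  · right
    rw [sq_sqrt (by positivity)]
    field_simp
  · exact .inl hL

theorem eventually_hundred_le_log_and_log_sq_le :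
    ∀ᶠ n : ℕ in atTop, 100 ≤ log n ∧ log n ^ 2 ≤ n := by
  have hlog : ∀ᶠ x : ℝ in atTop, 100 ≤ log x := tendsto_log_atTop.eventually_ge_atTop 100
  have hsq : ∀ᶠ x : ℝ in atTop, log x ^ 2 ≤ x := by
    filter_upwards [(tendsto_pow_log_div_mul_add_atTop 1 0 2 one_ne_zero).eventually_le_const
      zero_lt_one, eventually_gt_atTop 0] with x hx hx0
    simpa [div_le_one hx0] using hx
  exact tendsto_natCast_atTop_atTop.eventually (hlog.and hsq)

/-- There are `c > 0` and `N₀` such that for all `n ≥ N₀`,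
`Σ_{i=1}^n C(n,i)·C(n,⌈i·d(i)/100⌉)·(i·d(i)/(100n))^{i·d(i)} ≤ c·n⁻²`,
where the last exponentiation is a real power with real exponent `i·d(i)`. -/
theorem union_bound_sum_small :
    ∃ c : ℝ, 0 < c ∧ ∃ N₀ : ℕ, ∀ n : ℕ, N₀ ≤ n →
      ∑ i ∈ Finset.Icc 1 n,
          (n.choose i : ℝ) * (n.choose ⌈(i : ℝ) * dFun n i / 100⌉₊ : ℝ) *
            ((i : ℝ) * dFun n i / (100 * (n : ℝ))) ^ ((i : ℝ) * dFun n i)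
        ≤ c / (n : ℝ) ^ 2 := by
  obtain ⟨N₀, hN₀⟩ := eventually_atTop.mp eventually_hundred_le_log_and_log_sq_le
  refine ⟨1, one_pos, N₀, fun n hn => ?_⟩
  obtain ⟨hL, hLn⟩ := hN₀ n hn
  have hn0 : (n : ℝ) ≠ 0 := fun h => by norm_num [h] at hL
  calc _ ≤ ∑ _i ∈ Finset.Icc 1 n, 1 / (n : ℝ) ^ 3 := by
        refine Finset.sum_le_sum fun i hi => ?_
        obtain ⟨hi, hin⟩ := Finset.mem_Icc.mp hi
        exact choose_mul_choose_mul_rpow_le_one_div_pow_three hL hi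
          (one_le_dFun hi hin (by linarith)) (cast_mul_dFun_sq_le hi) (log_le_cast_mul_dFun hi hLn)
          (two_le_dFun_or_cast_mul_dFun_sq_eq hi (by linarith))
    _ = 1 / (n : ℝ) ^ 2 := by
        rw [Finset.sum_const, Nat.card_Icc, Nat.add_sub_cancel, nsmul_eq_mul]
        field_simp
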